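/- arXiv:2411.11415 — 4 statements merged into one kernel-verified Lean document; each statement's English description precedes it below -/
import Mathlib

section
/- Let h : ℝ^d → ℝ be C² with finite infimum h⋆. Suppose there is a constant C > 0 such that every gradient flow trajectory ẋ(s) = -∇h(x(s)) satisfies h(x(s)) - h⋆ ≤ e^{-2s/C}·(h(x(0)) - h⋆) for all s ≥ 0 and all initial points x(0). Then h satisfies the PL inequality h(x) - h⋆ ≤ (C/2)·‖∇h(x)‖² for all x ∈ ℝ^d. -/
open Real Filter Topology

theorem gradient_flow_decay_implies_pl {d : ℕ}
    (h : EuclideanSpace ℝ (Fin d) → ℝ) (C : ℝ) (hC : 0 < C)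
    (hsm : ContDiff ℝ 2 h) (hbdd : BddBelow (Set.range h))
    (hexist : ∀ x₀ : EuclideanSpace ℝ (Fin d), ∃ x : ℝ → EuclideanSpace ℝ (Fin d),
      x 0 = x₀ ∧ ∀ s : ℝ, 0 ≤ s → HasDerivAt x (-(gradient h (x s))) s)
    (hdecay : ∀ x : ℝ → EuclideanSpace ℝ (Fin d),
      (∀ s : ℝ, 0 ≤ s → HasDerivAt x (-(gradient h (x s))) s) →
      ∀ s : ℝ, 0 ≤ s →
        h (x s) - (⨅ y, h y) ≤ Real.exp (-2 * s / C) * (h (x 0) - (⨅ y, h y))) :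
    ∀ x : EuclideanSpace ℝ (Fin d), h x - (⨅ y, h y) ≤ C / 2 * ‖gradient h x‖ ^ 2 := by
  intro x₀
  set m := ⨅ y, h y with hm
  obtain ⟨x, hx0, hderiv⟩ := hexist x₀
  set g := gradient h (x 0) with hg
  set A := h (x 0) - m with hA
  -- derivative of h ∘ x at 0
  have hdiff : DifferentiableAt ℝ h (x 0) :=
    (hsm.differentiable (by norm_num)).differentiableAt
  have hgrad : HasGradientAt h g (x 0) := hdiff.hasGradientAt
  have hcomp : HasDerivAt (fun s => h (x s)) (-‖g‖ ^ 2) 0 := by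
    have h1 := hgrad.hasFDerivAt.comp_hasDerivAt 0 (hderiv 0 le_rfl)
    have h2 : (InnerProductSpace.toDual ℝ _ g) (-(gradient h (x 0))) = -‖g‖ ^ 2 := by
      rw [InnerProductSpace.toDual_apply_apply, ← hg, inner_neg_right,
        real_inner_self_eq_norm_sq]
    rw [h2] at h1
    exact h1
  -- derivative of the exponential bound at 0
  have hexp : HasDerivAt (fun s : ℝ => Real.exp (-2 * s / C) * A) (-2 / C * A) 0 := by
    have h1 : HasDerivAt (fun s : ℝ => -2 * s / C) (-2 / C) 0 := by
      simpa using ((hasDerivAt_id (0:ℝ)).const_mul (-2)).div_const C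
    have h2 := (h1.exp).mul_const A
    simpa using h2
  -- f = difference, f 0 = 0, f s ≤ 0 for s ≥ 0
  set f : ℝ → ℝ := fun s => h (x s) - m - Real.exp (-2 * s / C) * A with hf
  have hf0 : f 0 = 0 := by simp [hf, hA]
  have hfle : ∀ s : ℝ, 0 ≤ s → f s ≤ 0 := by
    intro s hs
    have := hdecay x hderiv s hs
    simp only [hf]
    linarith
  have hfderiv : HasDerivAt f (-‖g‖ ^ 2 - (-2 / C * A)) 0 :=
    (hcomp.sub_const m).sub hexp
  -- slope argument: derivative at 0 is ≤ 0
  have hslope : Tendsto (slope f 0) (𝓝[>] 0) (𝓝 (-‖g‖ ^ 2 - (-2 / C * A))) :=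
    (hasDerivAt_iff_tendsto_slope.mp hfderiv).mono_left
      (nhdsWithin_mono 0 (fun y hy => ne_of_gt hy))
  have hkey : -‖g‖ ^ 2 - (-2 / C * A) ≤ 0 := by
    refine le_of_tendsto hslope ?_
    filter_upwards [self_mem_nhdsWithin] with s hs
    have hs' : 0 < s := hs
    have : slope f 0 s = f s / s := by
      simp [slope_def_field, hf0]
    rw [this]
    exact div_nonpos_of_nonpos_of_nonneg (hfle s hs'.le) hs'.le
  have hx0' : x 0 = x₀ := hx0
  have : h x₀ - m ≤ C / 2 * ‖gradient h x₀‖ ^ 2 := by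
    rw [← hx0']
    have hg2 : (0:ℝ) ≤ ‖g‖ ^ 2 := sq_nonneg _
    rw [← hg, ← hA]
    have h2 : 2 / C * A ≤ ‖g‖ ^ 2 := by
      have hring : -‖g‖ ^ 2 - -2 / C * A = 2 / C * A - ‖g‖ ^ 2 := by ring
      rw [hring] at hkey
      linarith
    have h3 : A = C / 2 * (2 / C * A) := by field_simp
    rw [h3]
    exact mul_le_mul_of_nonneg_left h2 (by positivity)
  exact this
end

section
/- Let h : ℝ^d → ℝ be C² with infimum h⋆ > -∞ and PL constant C_PL < ∞, i.e., h(x) - h⋆ ≤ (C_PL/2)·‖∇h(x)‖² for all x. Let S be the set of minimizers of h. Then h satisfies the quadratic growth inequality: for all x ∈ ℝ^d, (1/(2·C_PL))·d(x,S)² ≤ h(x) - h⋆, where d(x,S) = inf_{y∈S} ‖x−y‖. -/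
set_option maxHeartbeats 1000000
open Real

theorem pl_implies_quadratic_growth {d : ℕ}
    (h : EuclideanSpace ℝ (Fin d) → ℝ) (CPL : ℝ) (hCPL : 0 < CPL)
    (hsm : ContDiff ℝ 2 h) (hbdd : BddBelow (Set.range h))
    (hPL : ∀ x, h x - (⨅ y, h y) ≤ CPL / 2 * ‖gradient h x‖ ^ 2)
    (S : Set (EuclideanSpace ℝ (Fin d)))
    (hS : S = {y | ∀ z, h y ≤ h z}) (hSne : S.Nonempty) :
    ∀ x, 1 / (2 * CPL) * (Metric.infDist x S) ^ 2 ≤ h x - (⨅ y, h y) := by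
  intro x
  set m := ⨅ y, h y with hm
  have hm_le : ∀ z, m ≤ h z := fun z => ciInf_le hbdd z
  have hdiff : Differentiable ℝ h := hsm.differentiable (by norm_num)
  have hcont : Continuous h := hdiff.continuous
  set g : EuclideanSpace ℝ (Fin d) → ℝ := fun z => Real.sqrt (h z - m) with hgdef
  have hg0 : ∀ z, 0 ≤ g z := fun z => Real.sqrt_nonneg _
  have hgcont : Continuous g := Real.continuous_sqrt.comp (hcont.sub continuous_const)
  set s : ℝ := Real.sqrt (2 * CPL) with hsdef
  have hspos : 0 < s := Real.sqrt_pos.mpr (by linarith)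
  have hs2 : s ^ 2 = 2 * CPL := Real.sq_sqrt (by linarith)
  set D := Metric.infDist x S with hD
  have hDnn : 0 ≤ D := Metric.infDist_nonneg
  have key : ∀ c', 0 < c' → c' < 1 / s → c' * D ≤ g x := by
    intro c' hc'0 hc'b
    have hc's : c' * s < 1 := (lt_div_iff₀ hspos).mp hc'b
    set R : ℝ := g x / c' + 1 with hR
    have hRpos : 0 < R := by positivity
    have hψcont : Continuous (fun z => g z + c' * dist x z) :=
      hgcont.add (continuous_const.mul (continuous_const.dist continuous_id))
    obtain ⟨y, hyK, hymin⟩ := (isCompact_closedBall x R).exists_isMinOn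
      ⟨x, Metric.mem_closedBall_self hRpos.le⟩ hψcont.continuousOn
    have hψyx : g y + c' * dist x y ≤ g x := by
      have := hymin (Metric.mem_closedBall_self hRpos.le)
      simpa using this
    have hdxy : dist x y ≤ g x / c' := by
      rw [le_div_iff₀ hc'0]
      nlinarith [hg0 y]
    have hdxyR : dist x y < R := lt_of_le_of_lt hdxy (by rw [hR]; linarith)
    have hym : h y = m := by
      by_contra hne
      have hym' : m < h y := lt_of_le_of_ne (hm_le y) (Ne.symm hne)
      set v := gradient h y with hv
      set q : ℝ := Real.sqrt (h y - m) with hq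
      have hqpos : 0 < q := Real.sqrt_pos.mpr (by linarith)
      have hvpos : 0 < ‖v‖ := by
        rcases eq_or_lt_of_le (norm_nonneg v) with h0 | h0
        · exfalso; have := hPL y; rw [← h0] at this; nlinarith
        · exact h0
      -- PL bound:  q ≤ s * ‖v‖ / 2
      have hsq : q ≤ s * ‖v‖ / 2 := by
        have h1 : CPL / 2 * ‖v‖ ^ 2 = (s * ‖v‖ / 2) ^ 2 := by
          rw [div_pow, mul_pow, hs2]; ring
        calc q ≤ Real.sqrt ((s * ‖v‖ / 2) ^ 2) :=
              Real.sqrt_le_sqrt (by rw [← h1]; exact hPL y)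
          _ = s * ‖v‖ / 2 := Real.sqrt_sq (by positivity)
      -- the curve t ↦ y + t • (-v)
      have hc : HasDerivAt (fun t : ℝ => y + t • (-v)) (-v) 0 := by
        simpa using ((hasDerivAt_id (0:ℝ)).smul_const (-v)).const_add y
      have hf : HasFDerivAt h (InnerProductSpace.toDual ℝ _ v) y :=
        (hdiff y).hasGradientAt
      have hu : HasDerivAt (fun t : ℝ => h (y + t • (-v)) - m) (-(‖v‖ ^ 2)) 0 := by
        have hc' : HasDerivAt (fun t : ℝ => y + t • (-v)) (-v) 0 := hc
        have h0 : (fun t : ℝ => y + t • (-v)) 0 = y := by simp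
        have := (h0 ▸ hf).comp_hasDerivAt 0 hc'
        have hval : (InnerProductSpace.toDual ℝ _ v) (-v) = -(‖v‖ ^ 2) := by
          rw [InnerProductSpace.toDual_apply_apply, inner_neg_right, real_inner_self_eq_norm_sq]
        rw [hval] at this
        exact this.sub_const m
      have hq0 : h y - m ≠ 0 := by linarith
      have hφ1 : HasDerivAt (fun t : ℝ => Real.sqrt (h (y + t • (-v)) - m))
          (1 / (2 * q) * (-(‖v‖ ^ 2))) 0 := by
        have h2 : HasDerivAt Real.sqrt (1 / (2 * q))
            ((fun t : ℝ => h (y + t • (-v)) - m) 0) := by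
          simpa [hq] using Real.hasDerivAt_sqrt hq0
        exact h2.comp 0 hu
      have hφ2 : HasDerivAt (fun t : ℝ => c' * ‖v‖ * t) (c' * ‖v‖) 0 := by
        simpa using (hasDerivAt_id (0:ℝ)).const_mul (c' * ‖v‖)
      have hφ : HasDerivAt (fun t : ℝ => Real.sqrt (h (y + t • (-v)) - m) + c' * ‖v‖ * t)
          (1 / (2 * q) * (-(‖v‖ ^ 2)) + c' * ‖v‖) 0 := hφ1.add hφ2
      have hDneg : 1 / (2 * q) * (-(‖v‖ ^ 2)) + c' * ‖v‖ < 0 := by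
        have h1 : c' * ‖v‖ * (2 * q) < ‖v‖ ^ 2 := by
          nlinarith [mul_lt_mul_of_pos_right hc's (pow_pos hvpos 2),
            mul_le_mul_of_nonneg_left hsq (by positivity : (0:ℝ) ≤ c' * ‖v‖)]
        have heq : 1 / (2 * q) * (-(‖v‖ ^ 2)) + c' * ‖v‖
            = (c' * ‖v‖ * (2 * q) - ‖v‖ ^ 2) / (2 * q) := by
          field_simp
          ring
        rw [heq]
        exact div_neg_of_neg_of_pos (by linarith) (by positivity)
      -- pick a small positive t with strict decrease
      set φ : ℝ → ℝ := fun t => Real.sqrt (h (y + t • (-v)) - m) + c' * ‖v‖ * t with hφdef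
      have hslope := hasDerivAt_iff_tendsto_slope.mp hφ
      have hev1 : ∀ᶠ t in nhdsWithin (0:ℝ) (Set.Ioi 0), slope φ 0 t < 0 := by
        have : ∀ᶠ t in nhdsWithin (0:ℝ) {(0:ℝ)}ᶜ, slope φ 0 t < 0 :=
          hslope.eventually_lt_const hDneg
        exact this.filter_mono (nhdsWithin_mono 0 (fun t ht => ne_of_gt ht))
      set δ : ℝ := (R - dist x y) / ‖v‖ with hδ
      have hδpos : 0 < δ := div_pos (by linarith) hvpos
      have hev2 : ∀ᶠ t in nhdsWithin (0:ℝ) (Set.Ioi 0), t < δ :=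
        eventually_nhdsWithin_of_eventually_nhds (eventually_lt_nhds hδpos)
      obtain ⟨t, hts, htδ, ht0⟩ := (hev1.and (hev2.and (eventually_mem_nhdsWithin))).exists
      have ht0' : (0:ℝ) < t := ht0
      set z := y + t • (-v) with hz
      have hφt : φ t < φ 0 := by
        have h2 : (φ t - φ 0) / (t - 0) < 0 := by
          rw [← slope_def_field]; exact hts
        rw [sub_zero] at h2
        have h3 := mul_neg_of_neg_of_pos h2 ht0'
        rw [div_mul_cancel₀ _ (ne_of_gt ht0')] at h3
        linarith
      have hφ0 : φ 0 = g y := by simp [hφdef, hgdef]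
      have hφteq : φ t = g z + c' * ‖v‖ * t := rfl
      have hdyz : dist y z = t * ‖v‖ := by
        rw [dist_eq_norm, hz]
        simp [norm_smul, abs_of_pos ht0']
      have htv : t * ‖v‖ < R - dist x y := by
        have := (lt_div_iff₀ hvpos).mp htδ
        linarith [(lt_div_iff₀ hvpos).mp htδ]
      have hzK : z ∈ Metric.closedBall x R := by
        rw [Metric.mem_closedBall, dist_comm]
        calc dist x z ≤ dist x y + dist y z := dist_triangle x y z
          _ = dist x y + t * ‖v‖ := by rw [hdyz]
          _ ≤ R := by linarith
      have h5 : g y + c' * dist x y ≤ g z + c' * dist x z := hymin hzK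
      have htri : dist x z ≤ dist x y + t * ‖v‖ := by
        calc dist x z ≤ dist x y + dist y z := dist_triangle x y z
          _ = dist x y + t * ‖v‖ := by rw [hdyz]
      have h6 := mul_le_mul_of_nonneg_left htri hc'0.le
      rw [hφteq, hφ0] at hφt
      nlinarith
    have hyS : y ∈ S := by
      rw [hS]; exact fun z => hym ▸ hm_le z
    have hinf : D ≤ dist x y := Metric.infDist_le_dist_of_mem hyS
    have hgy : g y = 0 := by simp [hgdef, hym]
    nlinarith [mul_le_mul_of_nonneg_left hinf hc'0.le]
  have hbD : (1 / s) * D ≤ g x := by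
    by_contra hlt
    push_neg at hlt
    have hD0 : 0 < D := by
      rcases eq_or_lt_of_le hDnn with h0 | h0
      · exfalso; rw [← h0, mul_zero] at hlt; exact absurd hlt (not_lt.mpr (hg0 x))
      · exact h0
    have hdiv : g x / D < 1 / s := (div_lt_iff₀ hD0).mpr (by nlinarith)
    obtain ⟨c', hc1, hc2⟩ := exists_between hdiv
    have hc'0 : 0 < c' := lt_of_le_of_lt (div_nonneg (hg0 x) hDnn) hc1
    have hkey := key c' hc'0 hc2
    rw [div_lt_iff₀ hD0] at hc1
    nlinarith
  have hgx2 : g x ^ 2 = h x - m := Real.sq_sqrt (by linarith [hm_le x])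
  have hfin : ((1 / s) * D) ^ 2 ≤ g x ^ 2 := pow_le_pow_left₀ (by positivity) hbD 2
  calc 1 / (2 * CPL) * D ^ 2 = ((1 / s) * D) ^ 2 := by rw [mul_pow, div_pow, one_pow, hs2]
    _ ≤ g x ^ 2 := hfin
    _ = h x - m := hgx2
end

section
/- Let f ∈ C²(ℝ^d) with f ≥ 0, f(0)=0, and quadratic growth f(x) ≥ ‖x‖²/(2C) for all x, for some C > 0. Then for any r > √(Cd·t) with t > 0, ∫_{‖x‖ ≥ r} e^{-f(x)/t} dx ≤ (2πCt)^{d/2}·exp(−(r − √(Cdt))²/(2tC)). -/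
/-!
Since `f x ≥ ‖x‖² / (2C)`, the integrand is dominated by the Gaussian `exp (-‖x‖² / (2σ²))`
with `σ² = C t`, so it suffices to bound the Gaussian tail. Chernoff's trick does that: on
`‖x‖ ≥ r` write `exp (-‖x‖² / (2σ²)) ≤ exp (-(1/(2σ²) - b) r²) · exp (-b ‖x‖²)` and integrate
the second factor over the whole space. The choice `b = d / (2r²)` is optimal, and the resulting
bound is turned into the stated one by `log u ≤ u - 1` for `u = r / √(dσ²)`.
-/

open Real MeasureTheory

theorem sq_rpow_half_le_exp_mul_sub_one {u : ℝ} (hu : 0 < u) {n : ℝ} (hn : 0 ≤ n) :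
    (u ^ 2) ^ (n / 2) ≤ exp (n * (u - 1)) := by
  rw [← rpow_natCast, ← rpow_mul hu.le, rpow_def_of_pos hu, exp_le_exp]
  push_cast
  rw [show (2 : ℝ) * (n / 2) = n by ring, mul_comm]
  exact mul_le_mul_of_nonneg_left (log_le_sub_one_of_pos hu) hn

/-- The Chernoff bound of `setIntegral_norm_ge_rexp_neg_mul_sq_norm_le` at `c = 1 / (2v)` and
the optimal `b = n / (2r²)`, in closed form. -/
theorem exp_mul_rpow_le_gaussian_tail {n v r : ℝ} (hn : 0 < n) (hv : 0 < v)
    (hr : √(n * v) < r) :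
    exp (-(1 / (2 * v) - n / (2 * r ^ 2)) * r ^ 2) * (π / (n / (2 * r ^ 2))) ^ (n / 2) ≤
      (2 * π * v) ^ (n / 2) * exp (-(r - √(n * v)) ^ 2 / (2 * v)) := by
  set a := √(n * v)
  have ha : 0 < a := sqrt_pos.mpr (by positivity)
  have hr0 : 0 < r := ha.trans hr
  have ha2 : a ^ 2 = n * v := sq_sqrt (by positivity)
  have hpi : π / (n / (2 * r ^ 2)) = 2 * π * v * (r / a) ^ 2 := by
    rw [div_pow, ha2]; field_simp
  have hexp : -(1 / (2 * v) - n / (2 * r ^ 2)) * r ^ 2 + n * (r / a - 1) =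
      -(r - a) ^ 2 / (2 * v) := by
    field_simp
    nlinarith
  calc _ = (2 * π * v) ^ (n / 2) *
        (exp (-(1 / (2 * v) - n / (2 * r ^ 2)) * r ^ 2) * ((r / a) ^ 2) ^ (n / 2)) := by
        rw [hpi, mul_rpow (by positivity) (by positivity)]; ring
    _ ≤ (2 * π * v) ^ (n / 2) *
        (exp (-(1 / (2 * v) - n / (2 * r ^ 2)) * r ^ 2) * exp (n * (r / a - 1))) := by
        gcongr
        exact sq_rpow_half_le_exp_mul_sub_one (div_pos hr0 ha) hn.le
    _ = _ := by rw [← exp_add, hexp]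

section

variable {V : Type*} [NormedAddCommGroup V] [InnerProductSpace ℝ V] [FiniteDimensional ℝ V]
  [MeasurableSpace V] [BorelSpace V]

theorem integrable_rexp_neg_mul_sq_norm {b : ℝ} (hb : 0 < b) :
    Integrable (fun x : V => exp (-b * ‖x‖ ^ 2)) :=
  Integrable.of_integral_ne_zero <| by
    rw [GaussianFourier.integral_rexp_neg_mul_sq_norm hb]
    positivity

theorem setIntegral_norm_ge_rexp_neg_mul_sq_norm_le {b c r : ℝ} (hb : 0 < b) (hbc : b ≤ c)
    (hr : 0 ≤ r) :
    ∫ x in {x : V | r ≤ ‖x‖}, exp (-c * ‖x‖ ^ 2) ≤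
      exp (-(c - b) * r ^ 2) * (π / b) ^ (Module.finrank ℝ V / 2 : ℝ) := by
  have hint : Integrable (fun x : V => exp (-(c - b) * r ^ 2) * exp (-b * ‖x‖ ^ 2)) :=
    (integrable_rexp_neg_mul_sq_norm hb).const_mul _
  have hpt : ∀ x : V, r ≤ ‖x‖ →
      exp (-c * ‖x‖ ^ 2) ≤ exp (-(c - b) * r ^ 2) * exp (-b * ‖x‖ ^ 2) := by
    intro x hx
    rw [← exp_add, exp_le_exp]
    have : r ^ 2 ≤ ‖x‖ ^ 2 := pow_le_pow_left₀ hr hx 2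
    nlinarith
  calc ∫ x in {x : V | r ≤ ‖x‖}, exp (-c * ‖x‖ ^ 2)
      ≤ ∫ x in {x : V | r ≤ ‖x‖}, exp (-(c - b) * r ^ 2) * exp (-b * ‖x‖ ^ 2) :=
        setIntegral_mono_on (integrable_rexp_neg_mul_sq_norm (by linarith)).integrableOn
          hint.integrableOn (isClosed_le continuous_const continuous_norm).measurableSet hpt
    _ ≤ ∫ x : V, exp (-(c - b) * r ^ 2) * exp (-b * ‖x‖ ^ 2) :=
        setIntegral_le_integral hint (ae_of_all _ fun _ => by positivity)
    _ = exp (-(c - b) * r ^ 2) * (π / b) ^ (Module.finrank ℝ V / 2 : ℝ) := by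
        rw [integral_const_mul, GaussianFourier.integral_rexp_neg_mul_sq_norm hb]

theorem setIntegral_norm_ge_gaussian_le {v r : ℝ} (hv : 0 < v)
    (hr : √(Module.finrank ℝ V * v) < r) :
    ∫ x in {x : V | r ≤ ‖x‖}, exp (-‖x‖ ^ 2 / (2 * v)) ≤
      (2 * π * v) ^ (Module.finrank ℝ V / 2 : ℝ) *
        exp (-(r - √(Module.finrank ℝ V * v)) ^ 2 / (2 * v)) := by
  set n : ℝ := (Module.finrank ℝ V : ℝ)
  have hr0 : 0 < r := (sqrt_nonneg _).trans_lt hr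
  rcases (Module.finrank ℝ V).eq_zero_or_pos with hV | hV
  · have : Subsingleton V := Module.finrank_zero_iff.mp hV
    have hempty : {x : V | r ≤ ‖x‖} = ∅ := by
      ext x
      simp [Subsingleton.elim x 0, hr0]
    rw [hempty, Measure.restrict_empty, integral_zero_measure]
    positivity
  have hn : 0 < n := by simpa [n] using hV
  have hbc : n / (2 * r ^ 2) ≤ 1 / (2 * v) := by
    have := (sqrt_lt' hr0).mp hr
    rw [div_le_div_iff₀ (by positivity) (by positivity)]
    nlinarith
  have hgauss : ∀ x : V, -‖x‖ ^ 2 / (2 * v) = -(1 / (2 * v)) * ‖x‖ ^ 2 := fun x => by ring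
  simp_rw [hgauss]
  exact (setIntegral_norm_ge_rexp_neg_mul_sq_norm_le (by positivity) hbc hr0.le).trans
    (exp_mul_rpow_le_gaussian_tail hn hv hr)

end

theorem gaussian_tail_bound_general {d : ℕ}
    (f : EuclideanSpace ℝ (Fin d) → ℝ) (C t r : ℝ) (hC : 0 < C) (ht : 0 < t)
    (hQG : ∀ x, ‖x‖ ^ 2 / (2 * C) ≤ f x)
    (hr : Real.sqrt (C * d * t) < r) :
    (∫ x in {x : EuclideanSpace ℝ (Fin d) | r ≤ ‖x‖}, Real.exp (-f x / t)) ≤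
      (2 * Real.pi * C * t) ^ ((d : ℝ) / 2) *
        Real.exp (-(r - Real.sqrt (C * d * t)) ^ 2 / (2 * t * C)) := by
  have hdom : ∀ x, exp (-f x / t) ≤ exp (-‖x‖ ^ 2 / (2 * t * C)) := fun x => by
    rw [exp_le_exp, neg_div, neg_div, neg_le_neg_iff,
      show ‖x‖ ^ 2 / (2 * t * C) = ‖x‖ ^ 2 / (2 * C) / t by ring]
    exact div_le_div_of_nonneg_right (hQG x) ht.le
  have hint : Integrable fun x : EuclideanSpace ℝ (Fin d) => exp (-‖x‖ ^ 2 / (2 * t * C)) :=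
    (integrable_rexp_neg_mul_sq_norm (b := (2 * t * C)⁻¹) (by positivity)).congr
      (ae_of_all _ fun x => by ring_nf)
  have htail := setIntegral_norm_ge_gaussian_le (V := EuclideanSpace ℝ (Fin d)) (r := r)
    (mul_pos hC ht)
    (by rwa [finrank_euclideanSpace_fin, show (d : ℝ) * (C * t) = C * d * t by ring])
  rw [finrank_euclideanSpace_fin, show (d : ℝ) * (C * t) = C * d * t by ring,
    show 2 * (C * t) = 2 * t * C by ring, ← mul_assoc] at htail
  exact (integral_mono_of_nonneg (ae_of_all _ fun _ => (exp_pos _).le) hint.integrableOn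
    (ae_of_all _ hdom)).trans htail

theorem gaussian_tail_bound {d : ℕ}
    (f : EuclideanSpace ℝ (Fin d) → ℝ) (C t r : ℝ) (hC : 0 < C) (ht : 0 < t)
    (hf : ContDiff ℝ 2 f) (hnn : ∀ x, 0 ≤ f x) (hf0 : f 0 = 0)
    (hQG : ∀ x, ‖x‖ ^ 2 / (2 * C) ≤ f x)
    (hr : Real.sqrt (C * d * t) < r) :
    (∫ x in {x : EuclideanSpace ℝ (Fin d) | r ≤ ‖x‖}, Real.exp (-f x / t)) ≤
      (2 * Real.pi * C * t) ^ ((d : ℝ) / 2) *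
        Real.exp (-(r - Real.sqrt (C * d * t)) ^ 2 / (2 * t * C)) :=
  gaussian_tail_bound_general f C t r hC ht hQG hr
end

section
/- Let f ∈ C²(ℝ^d) with ∫‖∇f‖² dν < ∞, and suppose Δf ≤ L₀ + L₁·‖∇f‖² pointwise. Let μ_t ∝ e^{-f/t} and let ν = e^{-g} be a compactly supported smooth probability density. Then for all 0 < t < 1/(2L₁), (1/t²)·∫‖∇f‖² dν ≤ (1 − 2tL₁)⁻¹·(FI(ν‖μ_t) + 2L₀/t). -/
open Real MeasureTheory
open scoped RealInnerProductSpace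

/-- The Laplacian of `f`, as the trace of the second derivative. -/
noncomputable def lap {d : ℕ} (f : EuclideanSpace ℝ (Fin d) → ℝ)
    (x : EuclideanSpace ℝ (Fin d)) : ℝ :=
  ∑ i : Fin d, ⟪EuclideanSpace.single i (1 : ℝ),
    fderiv ℝ (gradient f) x (EuclideanSpace.single i (1 : ℝ))⟫

set_option maxHeartbeats 2000000 in
theorem gradient_integral_bound {d : ℕ}
    (f : EuclideanSpace ℝ (Fin d) → ℝ) (L₀ L₁ t : ℝ)
    (hL₀ : 0 < L₀) (hL₁ : 0 < L₁) (ht : 0 < t) (ht2 : t < 1 / (2 * L₁))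
    (hf : ContDiff ℝ 2 f)
    (hlap : ∀ x, lap f x ≤ L₀ + L₁ * ‖gradient f x‖ ^ 2)
    -- `ρ = e^{-g}` is the Lebesgue density of `ν`; `gg = ∇g = -∇ log ρ`
    (ρ : EuclideanSpace ℝ (Fin d) → ℝ)
    (hρsm : ContDiff ℝ (⊤ : ℕ∞) (fun x => Real.sqrt (ρ x))) (hρc : HasCompactSupport ρ)
    (hρ0 : ∀ x, 0 ≤ ρ x) (hρ1 : (∫ x, ρ x) = 1)
    (gg : EuclideanSpace ℝ (Fin d) → EuclideanSpace ℝ (Fin d))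
    (hgg : gg = fun x => -(gradient (fun y => Real.log (ρ y)) x))
    (hint : Integrable (fun x => ‖gradient f x‖ ^ 2 * ρ x))
    (hintFI : Integrable (fun x => ‖gg x - t⁻¹ • gradient f x‖ ^ 2 * ρ x)) :
    1 / t ^ 2 * (∫ x, ‖gradient f x‖ ^ 2 * ρ x) ≤
      (1 - 2 * t * L₁)⁻¹ *
        ((∫ x, ‖gg x - t⁻¹ • gradient f x‖ ^ 2 * ρ x) + 2 * L₀ / t) := by
  have htne : t ≠ 0 := ne_of_gt ht
  set e : Fin d → EuclideanSpace ℝ (Fin d) := fun i => EuclideanSpace.single i (1 : ℝ) with he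
  -- smoothness of ρ
  have hρC : ContDiff ℝ (⊤ : ℕ∞) ρ := by
    have h : ρ = fun x => (Real.sqrt (ρ x)) ^ 2 := funext fun x => (Real.sq_sqrt (hρ0 x)).symm
    rw [h]; exact hρsm.pow 2
  have hρd : Differentiable ℝ ρ := hρC.differentiable (by simp)
  have hρcont : Continuous ρ := hρC.continuous
  have hρint : Integrable ρ := hρcont.integrable_of_hasCompactSupport hρc
  -- pointwise: ρ x • gg x = - gradient ρ x
  have hkey : ∀ x, ρ x • gg x = -gradient ρ x := by
    intro x
    rcases eq_or_lt_of_le (hρ0 x) with hx | hx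
    · have hmin : IsLocalMin ρ x :=
        Filter.Eventually.of_forall fun y => by rw [← hx]; exact hρ0 y
      have h0 : fderiv ℝ ρ x = 0 := hmin.fderiv_eq_zero
      simp [gradient, h0, ← hx]
    · have hfd : HasFDerivAt (fun y => Real.log (ρ y)) ((ρ x)⁻¹ • fderiv ℝ ρ x) x :=
        (Real.hasDerivAt_log hx.ne').comp_hasFDerivAt x (hρd x).hasFDerivAt
      have hgl : gradient (fun y => Real.log (ρ y)) x = (ρ x)⁻¹ • gradient ρ x := by
        simp only [gradient, hfd.fderiv, map_smulₛₗ, RingHom.id_apply, starRingEnd_apply,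
          star_trivial]
      rw [hgg]
      simp only [hgl, smul_neg, smul_smul]
      rw [mul_inv_cancel₀ hx.ne', one_smul]
  -- gradient of f is C¹
  have hG : ContDiff ℝ 1 (gradient f) := by
    have h1 : ContDiff ℝ 1 (fderiv ℝ f) := hf.fderiv_right (by norm_num)
    exact ((InnerProductSpace.toDual ℝ (EuclideanSpace ℝ (Fin d))).symm.contDiff).comp h1
  have hGd : Differentiable ℝ (gradient f) := hG.differentiable one_ne_zero
  have hGcont : Continuous (gradient f) := hG.continuous
  -- components of the gradient
  set Gi : Fin d → EuclideanSpace ℝ (Fin d) → ℝ := fun i x => ⟪e i, gradient f x⟫ with hGidef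
  have hGiC : ∀ i, ContDiff ℝ 1 (Gi i) := fun i =>
    (ContinuousLinearMap.contDiff (innerSL ℝ (e i))).comp hG
  have hGifd : ∀ i x, fderiv ℝ (Gi i) x = (innerSL ℝ (e i)).comp (fderiv ℝ (gradient f) x) :=
    fun i x => (((innerSL ℝ (e i)).hasFDerivAt).comp x (hGd x).hasFDerivAt).fderiv
  have hGie : ∀ i x, fderiv ℝ (Gi i) x (e i) = ⟪e i, fderiv ℝ (gradient f) x (e i)⟫ := by
    intro i x; rw [hGifd]; rfl
  -- lap as sum of derivatives of components
  have hlapeq : ∀ x, lap f x = ∑ i, fderiv ℝ (Gi i) x (e i) := by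
    intro x; rw [lap]; exact Finset.sum_congr rfl fun i _ => (hGie i x).symm
  -- continuity/compact support facts
  have hgradρcont : Continuous (gradient ρ) :=
    (InnerProductSpace.toDual ℝ (EuclideanSpace ℝ (Fin d))).symm.continuous.comp
      (hρC.continuous_fderiv (by simp))
  have hgradρc : HasCompactSupport (gradient ρ) :=
    (hρc.fderiv ℝ).mono fun x hx => by
      simp only [Function.mem_support] at hx ⊢
      intro h0; apply hx
      show (InnerProductSpace.toDual ℝ (EuclideanSpace ℝ (Fin d))).symm (fderiv ℝ ρ x) = 0
      rw [h0, map_zero]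
  have hfderivρc : ∀ i, HasCompactSupport (fun x => fderiv ℝ ρ x (e i)) := fun i =>
    (hρc.fderiv ℝ).mono fun x hx => by
      simp only [Function.mem_support] at hx ⊢
      intro h0; exact hx (by rw [h0]; rfl)
  have hfderivρcont : ∀ i, Continuous (fun x => fderiv ℝ ρ x (e i)) := fun i =>
    (hρC.continuous_fderiv (by simp)).clm_apply continuous_const
  have hGicont : ∀ i, Continuous (Gi i) := fun i => (hGiC i).continuous
  have hGifdcont : ∀ i, Continuous (fun x => fderiv ℝ (Gi i) x (e i)) := fun i =>
    ((hGiC i).continuous_fderiv one_ne_zero).clm_apply continuous_const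
  -- integration by parts, coordinatewise
  have hibp : ∀ i, ∫ x, ρ x * fderiv ℝ (Gi i) x (e i) = -∫ x, fderiv ℝ ρ x (e i) * Gi i x := by
    intro i
    apply integral_mul_fderiv_eq_neg_fderiv_mul_of_integrable
    · exact Continuous.integrable_of_hasCompactSupport
        (((hfderivρcont i)).mul (hGicont i)) ((hfderivρc i).mul_right)
    · exact Continuous.integrable_of_hasCompactSupport
        (hρcont.mul (hGifdcont i)) (hρc.mul_right)
    · exact Continuous.integrable_of_hasCompactSupport
        (hρcont.mul (hGicont i)) (hρc.mul_right)
    · exact fun x _ => hρd x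
    · exact fun x _ => (hGiC i).differentiable one_ne_zero x
  -- inner product as sums
  have hpair : ∀ a b : EuclideanSpace ℝ (Fin d), ∑ i, ⟪a, e i⟫ * ⟪e i, b⟫ = ⟪a, b⟫ := by
    intro a b
    simp [he, EuclideanSpace.inner_single_left, EuclideanSpace.inner_single_right,
      PiLp.inner_apply, RCLike.inner_apply, conj_trivial, mul_comm]
  have hfderivρ_inner : ∀ i x, fderiv ℝ ρ x (e i) = ⟪gradient ρ x, e i⟫ := fun i x =>
    (InnerProductSpace.toDual_symm_apply).symm
  have hsum1 : ∀ x, ∑ i, fderiv ℝ ρ x (e i) * Gi i x = ⟪gradient ρ x, gradient f x⟫ := by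
    intro x
    rw [← hpair (gradient ρ x) (gradient f x)]
    exact Finset.sum_congr rfl fun i _ => by rw [hfderivρ_inner]
  -- ∫ ρ lap f = - ∫ ⟪∇ρ, ∇f⟫
  have hlapibp : ∫ x, ρ x * lap f x = -∫ x, ⟪gradient ρ x, gradient f x⟫ := by
    have h1 : ∫ x, ρ x * lap f x = ∑ i, ∫ x, ρ x * fderiv ℝ (Gi i) x (e i) := by
      rw [← integral_finset_sum]
      · congr 1; funext x; rw [hlapeq x, Finset.mul_sum]
      · intro i _
        exact Continuous.integrable_of_hasCompactSupport
          (hρcont.mul (hGifdcont i)) (hρc.mul_right)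
    have h2 : ∫ x, ⟪gradient ρ x, gradient f x⟫ = ∑ i, ∫ x, fderiv ℝ ρ x (e i) * Gi i x := by
      rw [← integral_finset_sum]
      · congr 1; funext x; rw [← hsum1 x]
      · intro i _
        exact Continuous.integrable_of_hasCompactSupport
          (((hfderivρcont i)).mul (hGicont i)) ((hfderivρc i).mul_right)
    rw [h1, h2, ← Finset.sum_neg_distrib]
    exact Finset.sum_congr rfl fun i _ => hibp i
  -- pointwise: ⟪gg, ∇f⟫ ρ = -⟪∇ρ, ∇f⟫
  have hpt : ∀ x, ⟪gg x, gradient f x⟫ * ρ x = -⟪gradient ρ x, gradient f x⟫ := by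
    intro x
    have h1 : ⟪gg x, gradient f x⟫ * ρ x = ⟪ρ x • gg x, gradient f x⟫ := by
      rw [real_inner_smul_left]; ring
    rw [h1, hkey x, inner_neg_left]
  have hJint : Integrable (fun x => ⟪gg x, gradient f x⟫ * ρ x) := by
    have : (fun x => ⟪gg x, gradient f x⟫ * ρ x)
        = fun x => -⟪gradient ρ x, gradient f x⟫ := funext hpt
    rw [this]
    apply Integrable.neg
    apply Continuous.integrable_of_hasCompactSupport (hgradρcont.inner hGcont)
    apply hgradρc.mono
    intro x hx
    simp only [Function.mem_support] at hx ⊢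
    intro h0; exact hx (by rw [h0, inner_zero_left])
  -- integrability of ρ * lap f
  have hlapcont : Continuous (lap f) := by
    have : Continuous fun x => ∑ i, fderiv ℝ (Gi i) x (e i) :=
      continuous_finset_sum _ fun i _ => hGifdcont i
    exact this.congr fun x => (hlapeq x).symm
  have hlapint : Integrable (fun x => ρ x * lap f x) :=
    Continuous.integrable_of_hasCompactSupport (hρcont.mul hlapcont) hρc.mul_right
  -- J = ∫ ρ lap f
  have hJ : ∫ x, ⟪gg x, gradient f x⟫ * ρ x = ∫ x, ρ x * lap f x := by
    rw [hlapibp]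
    rw [show (fun x => ⟪gg x, gradient f x⟫ * ρ x)
        = fun x => -⟪gradient ρ x, gradient f x⟫ from funext hpt]
    rw [integral_neg]
  -- pointwise expansion
  have hexp : ∀ x, ‖gg x‖ ^ 2 * ρ x =
      ‖gg x - t⁻¹ • gradient f x‖ ^ 2 * ρ x
        + 2 * t⁻¹ * (⟪gg x, gradient f x⟫ * ρ x)
        - t⁻¹ ^ 2 * (‖gradient f x‖ ^ 2 * ρ x) := by
    intro x
    have h1 : ‖gg x - t⁻¹ • gradient f x‖ ^ 2
        = ‖gg x‖ ^ 2 - 2 * (t⁻¹ * ⟪gg x, gradient f x⟫) + t⁻¹ ^ 2 * ‖gradient f x‖ ^ 2 := by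
      rw [norm_sub_sq_real, real_inner_smul_right, norm_smul, mul_pow, Real.norm_eq_abs, sq_abs]
    rw [h1]; ring
  have hgg2int : Integrable (fun x => ‖gg x‖ ^ 2 * ρ x) := by
    rw [show (fun x => ‖gg x‖ ^ 2 * ρ x) = fun x =>
        ‖gg x - t⁻¹ • gradient f x‖ ^ 2 * ρ x
          + 2 * t⁻¹ * (⟪gg x, gradient f x⟫ * ρ x)
          - t⁻¹ ^ 2 * (‖gradient f x‖ ^ 2 * ρ x) from funext hexp]
    exact (hintFI.add (hJint.const_mul _)).sub (hint.const_mul _)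
  -- integral expansion
  have hFIexp : ∫ x, ‖gg x - t⁻¹ • gradient f x‖ ^ 2 * ρ x
      = (∫ x, ‖gg x‖ ^ 2 * ρ x) - 2 * t⁻¹ * (∫ x, ⟪gg x, gradient f x⟫ * ρ x)
        + t⁻¹ ^ 2 * (∫ x, ‖gradient f x‖ ^ 2 * ρ x) := by
    have hpt2 : ∀ x, ‖gg x - t⁻¹ • gradient f x‖ ^ 2 * ρ x
        = (‖gg x‖ ^ 2 * ρ x + t⁻¹ ^ 2 * (‖gradient f x‖ ^ 2 * ρ x))
          - 2 * t⁻¹ * (⟪gg x, gradient f x⟫ * ρ x) := fun x => by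
      have := hexp x; linarith
    have i1 : Integrable (fun x => ‖gg x‖ ^ 2 * ρ x + t⁻¹ ^ 2 * (‖gradient f x‖ ^ 2 * ρ x)) :=
      hgg2int.add (hint.const_mul _)
    have i2 : Integrable (fun x => 2 * t⁻¹ * (⟪gg x, gradient f x⟫ * ρ x)) :=
      hJint.const_mul _
    rw [show (fun x => ‖gg x - t⁻¹ • gradient f x‖ ^ 2 * ρ x) = fun x =>
        (‖gg x‖ ^ 2 * ρ x + t⁻¹ ^ 2 * (‖gradient f x‖ ^ 2 * ρ x))
          - 2 * t⁻¹ * (⟪gg x, gradient f x⟫ * ρ x) from funext hpt2]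
    rw [integral_sub i1 i2, integral_add hgg2int (hint.const_mul _),
      integral_const_mul, integral_const_mul]
    ring
  -- bound on J
  have hJle : ∫ x, ρ x * lap f x ≤ L₀ + L₁ * ∫ x, ‖gradient f x‖ ^ 2 * ρ x := by
    have hmono : ∫ x, ρ x * lap f x ≤ ∫ x, L₀ * ρ x + L₁ * (‖gradient f x‖ ^ 2 * ρ x) := by
      apply integral_mono hlapint ((hρint.const_mul _).add (hint.const_mul _))
      intro x
      simp only [Pi.add_apply]
      have h1 := hlap x
      have h2 := hρ0 x
      nlinarith
    have iL0 : Integrable (fun x => L₀ * ρ x) := hρint.const_mul _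
    have iL1 : Integrable (fun x => L₁ * (‖gradient f x‖ ^ 2 * ρ x)) := hint.const_mul _
    rw [integral_add iL0 iL1, integral_const_mul, integral_const_mul, hρ1, mul_one] at hmono
    exact hmono
  -- nonnegativity
  have hInn : 0 ≤ ∫ x, ‖gradient f x‖ ^ 2 * ρ x :=
    integral_nonneg fun x => mul_nonneg (by positivity) (hρ0 x)
  have hgg2nn : 0 ≤ ∫ x, ‖gg x‖ ^ 2 * ρ x :=
    integral_nonneg fun x => mul_nonneg (by positivity) (hρ0 x)
  -- final arithmetic
  set I := ∫ x, ‖gradient f x‖ ^ 2 * ρ x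
  set A := ∫ x, ‖gg x - t⁻¹ • gradient f x‖ ^ 2 * ρ x
  have hkey2 : t⁻¹ ^ 2 * I ≤ A + 2 * t⁻¹ * (L₀ + L₁ * I) := by
    have hJ2 : ∫ x, ⟪gg x, gradient f x⟫ * ρ x ≤ L₀ + L₁ * I := hJ ▸ hJle
    have h2t : 0 < 2 * t⁻¹ := by positivity
    nlinarith [hFIexp, hgg2nn, mul_le_mul_of_nonneg_left hJ2 (le_of_lt h2t)]
  have hc : 0 < 1 - 2 * t * L₁ := by
    have : t * (2 * L₁) < 1 := (lt_div_iff₀ (by positivity)).1 ht2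
    nlinarith
  rw [inv_mul_eq_div, le_div_iff₀ hc]
  have h1 : 1 / t ^ 2 * I * (1 - 2 * t * L₁) = t⁻¹ ^ 2 * I - 2 * t⁻¹ * (L₁ * I) := by
    field_simp
  rw [h1]
  have h2 : 2 * L₀ / t = 2 * t⁻¹ * L₀ := by field_simp
  rw [h2]
  linarith [hkey2]
end
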